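/- arXiv:2403.19664 — 2 statements merged into one kernel-verified Lean document; each statement's English description precedes it below -/
import Mathlib

section
/- For complex parameters b, c (not non-positive integers) and complex z, the product of two confluent-limit hypergeometric functions satisfies ₀F₁(;b;z) · ₀F₁(;c;z) = ₂F₃((b+c-1)/2, (b+c)/2; b, c, b+c-1; 4z), as an identity of formal power series in z (equivalently of entire functions of z). -/
/-!
Cauchy-multiplying the two series, the coefficient of `z^n` is
`Σ_{i+j=n} 1/((b)_i i! (c)_j j!) = (b+c+n-1)_n / ((b)_n (c)_n n!)`:
after clearing denominators this is `Σ_i C(n,i) (b+i)_{n-i} (c+n-i)_i = (b+c+n-1)_n`, which is the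
Chu–Vandermonde identity for falling factorials once each rising factorial is read backwards.
Multiplying numerator and denominator by `(b+c-1)_n` gives `(b+c-1)_{2n}` on top, and the
duplication formula `(x)_{2n} = 4^n (x/2)_n ((x+1)/2)_n` turns this into the `₂F₃` coefficient.
-/

/-- The generalized hypergeometric series `ₚF_q(a; b; z)` with upper parameter list `a`
and lower parameter list `b`, `Σ_{k≥0} ∏(aᵢ)_k / (∏(bⱼ)_k k!) z^k`. -/
noncomputable def hyp (a b : List ℂ) (z : ℂ) : ℂ :=
  ∑' k : ℕ, ((a.map (fun p => (ascPochhammer ℂ k).eval p)).prod /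
    (b.map (fun p => (ascPochhammer ℂ k).eval p)).prod) * z ^ k / (k.factorial : ℂ)

open Finset Polynomial
open scoped Nat

theorem descPochhammer_smeval_eq_eval {R : Type*} [Ring R] (r : R) (n : ℕ) :
    (descPochhammer ℤ n).smeval r = (descPochhammer R n).eval r := by
  rw [← aeval_eq_smeval, aeval_def, ← eval_map, descPochhammer_map]

theorem ascPochhammer_eval_add_nat {S : Type*} [CommSemiring S] (s : S) (m n : ℕ) :
    (ascPochhammer S (m + n)).eval s =
      (ascPochhammer S m).eval s * (ascPochhammer S n).eval (s + m) := by
  simp [← ascPochhammer_mul, eval_comp]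

section Pochhammer

variable {R : Type*} [CommRing R]

theorem descPochhammer_eval_add (r s : R) (n : ℕ) :
    (descPochhammer R n).eval (r + s) = ∑ ij ∈ antidiagonal n,
      n.choose ij.1 * ((descPochhammer R ij.1).eval r * (descPochhammer R ij.2).eval s) := by
  simpa only [descPochhammer_smeval_eq_eval] using
    Ring.descPochhammer_smeval_add n (Commute.all r s)

theorem ascPochhammer_eval_eq_descPochhammer_eval (r : R) (n : ℕ) :
    (ascPochhammer R n).eval r = (descPochhammer R n).eval (r + n - 1) := by
  rw [descPochhammer_eval_eq_ascPochhammer]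
  ring_nf

theorem sum_antidiagonal_choose_mul_ascPochhammer_eval (r s : R) (n : ℕ) :
    ∑ ij ∈ antidiagonal n, n.choose ij.1 *
        ((ascPochhammer R ij.2).eval (r + ij.1) * (ascPochhammer R ij.1).eval (s + ij.2)) =
      (ascPochhammer R n).eval (r + s + n - 1) := by
  rw [ascPochhammer_eval_eq_descPochhammer_eval,
    show r + s + n - 1 + n - 1 = (s + n - 1) + (r + n - 1) by ring, descPochhammer_eval_add]
  refine sum_congr rfl fun ⟨i, j⟩ hij => ?_
  obtain rfl : i + j = n := HasAntidiagonal.mem_antidiagonal.mp hij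
  rw [ascPochhammer_eval_eq_descPochhammer_eval, ascPochhammer_eval_eq_descPochhammer_eval,
    mul_comm (eval _ (descPochhammer R i))]
  push_cast
  ring_nf

theorem ascPochhammer_eval_ne_zero [IsDomain R] {r : R} (hr : ∀ k : ℕ, r ≠ -k) (n : ℕ) :
    (ascPochhammer R n).eval r ≠ 0 := by
  rw [Ne, ascPochhammer_eval_eq_zero_iff]
  rintro ⟨k, -, hk⟩
  exact hr k (by rw [hk, neg_neg])

end Pochhammer

theorem ascPochhammer_eval_two_mul {K : Type*} [Field K] [NeZero (2 : K)] (x : K) (n : ℕ) :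
    (ascPochhammer K (2 * n)).eval x =
      4 ^ n * (ascPochhammer K n).eval (x / 2) * (ascPochhammer K n).eval ((x + 1) / 2) := by
  induction n with
  | zero => simp
  | succ n ih =>
    rw [show 2 * (n + 1) = 2 * n + 1 + 1 by ring]
    simp only [ascPochhammer_succ_eval, ih]
    field_simp
    push_cast
    ring

noncomputable def hyp0F1Term (b z : ℂ) (k : ℕ) : ℂ :=
  1 / (ascPochhammer ℂ k).eval b * z ^ k / k !

theorem hyp_nil_singleton (b z : ℂ) : hyp [] [b] z = ∑' k, hyp0F1Term b z k := by
  simp [hyp, hyp0F1Term]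

theorem summable_norm_hyp0F1Term (b z : ℂ) : Summable fun k => ‖hyp0F1Term b z k‖ := by
  refine summable_norm_iff.mpr <| summable_of_ratio_norm_eventually_le (r := 1 / 2) (by norm_num) ?_
  obtain ⟨N, hN⟩ := exists_nat_ge (‖b‖ + 2 * ‖z‖ + 1)
  filter_upwards [Filter.eventually_ge_atTop N] with k hk
  have hstep : hyp0F1Term b z (k + 1) = hyp0F1Term b z k * (z / ((b + k) * (k + 1))) := by
    simp only [hyp0F1Term, ascPochhammer_succ_eval, Nat.factorial_succ, Nat.cast_mul,
      div_eq_mul_inv, mul_inv, pow_succ]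
    push_cast
    ring
  have hbk : 2 * ‖z‖ + 1 ≤ ‖b + k‖ := by
    have hkb := norm_sub_norm_le (k : ℂ) (-b)
    rw [Complex.norm_natCast, norm_neg, sub_neg_eq_add, add_comm] at hkb
    have : (N : ℝ) ≤ k := by exact_mod_cast hk
    linarith
  have hratio : ‖z / ((b + k) * (k + 1))‖ ≤ 1 / 2 := by
    have hk1 : ‖((k : ℂ) + 1)‖ = k + 1 := by exact_mod_cast Complex.norm_natCast (k + 1)
    have hk0 : (0 : ℝ) ≤ k := k.cast_nonneg
    rw [norm_div, norm_mul, hk1, div_le_iff₀ (by nlinarith [norm_nonneg z])]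
    nlinarith [norm_nonneg z]
  rw [hstep, norm_mul, mul_comm]
  exact mul_le_mul_of_nonneg_right hratio (norm_nonneg _)

theorem hyp0F1Term_mul_hyp0F1Term {b c : ℂ} (hb : ∀ k : ℕ, b ≠ -(k : ℂ))
    (hc : ∀ k : ℕ, c ≠ -(k : ℂ)) (z : ℂ) (i j : ℕ) :
    hyp0F1Term b z i * hyp0F1Term c z j =
      (i + j).choose i *
          ((ascPochhammer ℂ j).eval (b + i) * (ascPochhammer ℂ i).eval (c + j)) /
        ((ascPochhammer ℂ (i + j)).eval b * (ascPochhammer ℂ (i + j)).eval c * (i + j)!) *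
        z ^ (i + j) := by
  have hcn : (ascPochhammer ℂ (i + j)).eval c =
      (ascPochhammer ℂ j).eval c * (ascPochhammer ℂ i).eval (c + j) := by
    rw [add_comm, ascPochhammer_eval_add_nat]
  obtain ⟨hbi, hbj⟩ := mul_ne_zero_iff.mp <|
    ascPochhammer_eval_add_nat b i j ▸ ascPochhammer_eval_ne_zero hb (i + j)
  obtain ⟨hcj, hci⟩ := mul_ne_zero_iff.mp <| hcn ▸ ascPochhammer_eval_ne_zero hc (i + j)
  have hchoose : ((i + j).choose i : ℂ) ≠ 0 := by exact_mod_cast (Nat.choose_pos le_self_add).ne'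
  have hfac : ((i + j)! : ℂ) = (i + j).choose i * i ! * j ! := by
    rw [Nat.choose_symm_add]
    exact_mod_cast (Nat.add_choose_mul_factorial_mul_factorial i j).symm
  rw [hyp0F1Term, hyp0F1Term, hfac, hcn, ascPochhammer_eval_add_nat, pow_add]
  field_simp

theorem sum_antidiagonal_hyp0F1Term_mul_hyp0F1Term {b c : ℂ} (hb : ∀ k : ℕ, b ≠ -(k : ℂ))
    (hc : ∀ k : ℕ, c ≠ -(k : ℂ)) (hbc : ∀ k : ℕ, b + c - 1 ≠ -(k : ℂ)) (z : ℂ) (n : ℕ) :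
    ∑ ij ∈ antidiagonal n, hyp0F1Term b z ij.1 * hyp0F1Term c z ij.2 =
      (ascPochhammer ℂ n).eval ((b + c - 1) / 2) * (ascPochhammer ℂ n).eval ((b + c) / 2) /
          ((ascPochhammer ℂ n).eval b *
            ((ascPochhammer ℂ n).eval c * (ascPochhammer ℂ n).eval (b + c - 1))) *
        (4 * z) ^ n / (n ! : ℂ) := by
  have hsum : ∑ ij ∈ antidiagonal n, hyp0F1Term b z ij.1 * hyp0F1Term c z ij.2 =
      (ascPochhammer ℂ n).eval (b + c + n - 1) /
        ((ascPochhammer ℂ n).eval b * (ascPochhammer ℂ n).eval c * n !) * z ^ n := by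
    rw [← sum_antidiagonal_choose_mul_ascPochhammer_eval, sum_div, sum_mul]
    refine sum_congr rfl fun ⟨i, j⟩ hij => ?_
    obtain rfl : i + j = n := HasAntidiagonal.mem_antidiagonal.mp hij
    exact hyp0F1Term_mul_hyp0F1Term hb hc z i j
  have hdup : (ascPochhammer ℂ n).eval (b + c - 1) * (ascPochhammer ℂ n).eval (b + c + n - 1) =
      4 ^ n * (ascPochhammer ℂ n).eval ((b + c - 1) / 2) *
        (ascPochhammer ℂ n).eval ((b + c) / 2) := by
    rw [show b + c + n - 1 = b + c - 1 + n by ring, ← ascPochhammer_eval_add_nat, ← two_mul,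
      ascPochhammer_eval_two_mul, sub_add_cancel]
  have := ascPochhammer_eval_ne_zero hb n
  have := ascPochhammer_eval_ne_zero hc n
  have := ascPochhammer_eval_ne_zero hbc n
  have : (n ! : ℂ) ≠ 0 := by exact_mod_cast n.factorial_ne_zero
  rw [hsum, mul_pow]
  field_simp
  linear_combination z ^ n * hdup

theorem hyp0F1_mul_hyp0F1 (b c z : ℂ)
    (hb : ∀ k : ℕ, b ≠ -(k : ℂ)) (hc : ∀ k : ℕ, c ≠ -(k : ℂ))
    (hbc : ∀ k : ℕ, b + c - 1 ≠ -(k : ℂ)) :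
    hyp [] [b] z * hyp [] [c] z =
      hyp [(b + c - 1) / 2, (b + c) / 2] [b, c, b + c - 1] (4 * z) := by
  rw [hyp_nil_singleton, hyp_nil_singleton,
    tsum_mul_tsum_eq_tsum_sum_antidiagonal_of_summable_norm (summable_norm_hyp0F1Term b z)
      (summable_norm_hyp0F1Term c z)]
  simp only [hyp, List.map_cons, List.map_nil, List.prod_cons, List.prod_nil, mul_one]
  exact tsum_congr (sum_antidiagonal_hyp0F1Term_mul_hyp0F1Term hb hc hbc z)
end

section
/- For nonnegative integers μ, ν and complex z, J_μ(z) J_ν(z) = (2^{-μ-ν} z^{μ+ν} / (Γ(μ+1) Γ(ν+1))) · ₂F₃((μ+ν+1)/2, (μ+ν)/2 + 1; μ+1, ν+1, μ+ν+1; -z²). -/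
/-- Bessel function of the first kind of integer order, defined by the series
`J_n(z) = Σ_{m≥0} (-1)^m / (m! Γ(m+n+1)) (z/2)^{2m+n}`. -/
noncomputable def besselJZ (n : ℤ) (z : ℂ) : ℂ :=
  ∑' m : ℕ, ((-1 : ℂ) ^ m / ((m.factorial : ℂ) * Complex.Gamma ((m : ℂ) + (n : ℂ) + 1))) *
    (z / 2) ^ (2 * (m : ℤ) + n)

open Finset

private lemma fne (n : ℕ) : ((n.factorial : ℂ)) ≠ 0 :=
  Nat.cast_ne_zero.mpr n.factorial_ne_zero

private lemma asc_eval_nat (n : ℕ) : ∀ k : ℕ,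
    (ascPochhammer ℂ k).eval ((n : ℂ) + 1) =
      ((n + k).factorial : ℂ) / (n.factorial : ℂ)
  | 0 => by simp [div_self (fne n)]
  | (k + 1) => by
      rw [ascPochhammer_succ_eval, asc_eval_nat n k]
      rw [div_mul_eq_mul_div, div_eq_div_iff (fne n) (fne n)]
      have h : (n + (k+1)).factorial = (n + k).factorial * (n + k + 1) := by
        rw [show n + (k+1) = (n+k)+1 by ring, Nat.factorial_succ]; ring
      rw [h]; push_cast; ring

private lemma asc_dup (a : ℂ) : ∀ k : ℕ,
    (ascPochhammer ℂ k).eval a * (ascPochhammer ℂ k).eval (a + 1/2) * 4 ^ k =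
      (ascPochhammer ℂ (2 * k)).eval (2 * a)
  | 0 => by simp
  | (k + 1) => by
      have h2 : 2 * (k + 1) = (2 * k + 1) + 1 := by ring
      rw [h2, ascPochhammer_succ_eval, ascPochhammer_succ_eval,
        ascPochhammer_succ_eval, ascPochhammer_succ_eval, ← asc_dup a k]
      push_cast
      ring

private lemma vdm (μ ν k : ℕ) :
    ∑ m ∈ range (k + 1), k.choose m * (μ + ν + k).choose (μ + m) =
      (μ + ν + 2 * k).choose (μ + k) := by
  have h := Nat.add_choose_eq k (μ + ν + k) (μ + k)
  rw [show k + (μ + ν + k) = μ + ν + 2 * k by ring] at h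
  rw [h, Finset.Nat.sum_antidiagonal_eq_sum_range_succ_mk]
  rw [← Finset.sum_subset (Finset.range_subset_range.mpr (by omega : k + 1 ≤ μ + k + 1))
    (fun x hx hxn => by
      have : k < x := by simp only [Finset.mem_range] at hx hxn; omega
      simp [Nat.choose_eq_zero_of_lt this])]
  rw [← Finset.sum_range_reflect
    (fun m => k.choose m * (μ + ν + k).choose (μ + m)) (k + 1)]
  refine Finset.sum_congr rfl fun j hj => ?_
  have hjk : j ≤ k := by simpa [Nat.lt_succ_iff] using hj
  simp only [Nat.add_sub_cancel]
  rw [Nat.choose_symm hjk, show μ + (k - j) = μ + k - j by omega]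

private lemma innerFacSum (μ ν k : ℕ) :
    ∑ m ∈ range (k + 1),
        (1 : ℂ) / ((m.factorial : ℂ) * ((m + μ).factorial : ℂ) *
          ((k - m).factorial : ℂ) * ((k - m + ν).factorial : ℂ)) =
      ((μ + ν + 2 * k).factorial : ℂ) /
        ((k.factorial : ℂ) * ((μ + ν + k).factorial : ℂ) *
          ((μ + k).factorial : ℂ) * ((ν + k).factorial : ℂ)) := by
  have key : ∀ m ∈ range (k + 1),
      (1 : ℂ) / ((m.factorial : ℂ) * ((m + μ).factorial : ℂ) *
          ((k - m).factorial : ℂ) * ((k - m + ν).factorial : ℂ)) =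
        ((k.choose m * (μ + ν + k).choose (μ + m) : ℕ) : ℂ) /
          ((k.factorial : ℂ) * ((μ + ν + k).factorial : ℂ)) := by
    intro m hm
    have hmk : m ≤ k := by simpa [Nat.lt_succ_iff] using hm
    have h1 : k.choose m * m.factorial * (k - m).factorial = k.factorial :=
      Nat.choose_mul_factorial_mul_factorial hmk
    have h2 : (μ + ν + k).choose (μ + m) * (μ + m).factorial *
        (k - m + ν).factorial = (μ + ν + k).factorial := by
      have := Nat.choose_mul_factorial_mul_factorial
        (show μ + m ≤ μ + ν + k by omega)
      rwa [show μ + ν + k - (μ + m) = k - m + ν by omega] at this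
    rw [div_eq_div_iff
      (by exact mul_ne_zero (mul_ne_zero (mul_ne_zero (fne _) (fne _)) (fne _)) (fne _))
      (mul_ne_zero (fne _) (fne _))]
    rw [show m + μ = μ + m by ring]
    push_cast [← h1, ← h2]
    ring
  rw [Finset.sum_congr rfl key, ← Finset.sum_div, ← Nat.cast_sum, vdm]
  have h3 : (μ + ν + 2 * k).choose (μ + k) * (μ + k).factorial *
      (ν + k).factorial = (μ + ν + 2 * k).factorial := by
    have := Nat.choose_mul_factorial_mul_factorial
      (show μ + k ≤ μ + ν + 2 * k by omega)
    rwa [show μ + ν + 2 * k - (μ + k) = ν + k by omega] at this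
  rw [div_eq_div_iff (mul_ne_zero (fne _) (fne _))
    (by exact mul_ne_zero (mul_ne_zero (mul_ne_zero (fne _) (fne _)) (fne _)) (fne _))]
  push_cast [← h3]
  ring

private lemma besselJZ_nat (μ : ℕ) (z : ℂ) :
    besselJZ (μ : ℤ) z = ∑' m : ℕ,
      ((-1 : ℂ) ^ m / ((m.factorial : ℂ) * ((m + μ).factorial : ℂ))) *
        (z / 2) ^ (2 * m + μ) := by
  unfold besselJZ
  refine tsum_congr fun m => ?_
  have hG : Complex.Gamma ((m : ℂ) + (((μ : ℤ) : ℂ)) + 1) = ((m + μ).factorial : ℂ) := by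
    rw [show (m : ℂ) + (((μ : ℤ) : ℂ)) + 1 = ((m + μ : ℕ) : ℂ) + 1 by push_cast; ring]
    exact Complex.Gamma_nat_eq_factorial (m + μ)
  have hp : (z / 2) ^ (2 * (m : ℤ) + ((μ : ℕ) : ℤ)) = (z / 2) ^ (2 * m + μ) := by
    rw [show (2 * (m : ℤ) + ((μ : ℕ) : ℤ)) = ((2 * m + μ : ℕ) : ℤ) by push_cast; ring,
      zpow_natCast]
  rw [hG, hp]

private lemma bessel_summable (μ : ℕ) (w : ℂ) :
    Summable fun m : ℕ =>
      ‖((-1 : ℂ) ^ m / ((m.factorial : ℂ) * ((m + μ).factorial : ℂ))) *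
        w ^ (2 * m + μ)‖ := by
  apply Summable.of_nonneg_of_le (fun m => norm_nonneg _) (fun m => ?_)
    ((Real.summable_pow_div_factorial (‖w‖ ^ 2)).mul_left (‖w‖ ^ μ))
  have hfac : (1 : ℝ) ≤ ((m + μ).factorial : ℝ) := by
    exact_mod_cast Nat.one_le_iff_ne_zero.mpr (m + μ).factorial_ne_zero
  have hmfac : (0 : ℝ) < (m.factorial : ℝ) := by
    exact_mod_cast m.factorial_pos
  rw [norm_mul, norm_div, norm_pow, norm_pow, norm_neg, norm_one, one_pow, norm_mul,
    Complex.norm_natCast, Complex.norm_natCast]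
  calc (1 : ℝ) / ((m.factorial : ℝ) * ((m + μ).factorial : ℝ)) * ‖w‖ ^ (2 * m + μ)
      = ((‖w‖ ^ 2) ^ m * ‖w‖ ^ μ) / ((m.factorial : ℝ) * ((m + μ).factorial : ℝ)) := by
        rw [pow_add, pow_mul]; ring
    _ ≤ ((‖w‖ ^ 2) ^ m * ‖w‖ ^ μ) / (m.factorial : ℝ) := by
        apply div_le_div_of_nonneg_left (by positivity) hmfac
        nlinarith
    _ = ‖w‖ ^ μ * ((‖w‖ ^ 2) ^ m / (m.factorial : ℝ)) := by ring

private lemma alg (σ P Q T S a b c d e f g N : ℂ) (ha : a ≠ 0) (hb : b ≠ 0) (hc : c ≠ 0)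
    (hd : d ≠ 0) (he : e ≠ 0) (hf : f ≠ 0) (hg : g ≠ 0) (hT : T ≠ 0) (hS : S ≠ 0) :
    σ * (P * Q / (T * S)) * (N / (d * g * e * f)) =
      S⁻¹ * Q / (a * b) * (N / c / T / (e / a * (f / b * (g / c))) * (σ * P) / d) := by
  field_simp

set_option maxHeartbeats 1000000 in
theorem besselJ_mul_besselJ (μ ν : ℕ) (z : ℂ) :
    besselJZ (μ : ℤ) z * besselJZ (ν : ℤ) z =
      2 ^ (-(μ : ℤ) - (ν : ℤ)) * z ^ (μ + ν) /
          (Complex.Gamma ((μ : ℂ) + 1) * Complex.Gamma ((ν : ℂ) + 1)) *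
        hyp [((μ : ℂ) + ν + 1) / 2, ((μ : ℂ) + ν) / 2 + 1]
          [(μ : ℂ) + 1, (ν : ℂ) + 1, (μ : ℂ) + ν + 1] (-z ^ 2) := by
  rw [besselJZ_nat μ z, besselJZ_nat ν z,
    tsum_mul_tsum_eq_tsum_sum_antidiagonal_of_summable_norm
      (bessel_summable μ (z / 2)) (bessel_summable ν (z / 2))]
  unfold hyp
  rw [show Complex.Gamma ((μ : ℂ) + 1) = (μ.factorial : ℂ) from
      Complex.Gamma_nat_eq_factorial μ,
    show Complex.Gamma ((ν : ℂ) + 1) = (ν.factorial : ℂ) from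
      Complex.Gamma_nat_eq_factorial ν,
    ← tsum_mul_left]
  refine tsum_congr fun k => ?_
  rw [Finset.Nat.sum_antidiagonal_eq_sum_range_succ_mk]
  -- evaluate the left side
  have key : ∀ m ∈ range (k + 1),
      ((-1 : ℂ) ^ m / ((m.factorial : ℂ) * ((m + μ).factorial : ℂ))) *
          (z / 2) ^ (2 * m + μ) *
        (((-1 : ℂ) ^ (k - m) / (((k - m).factorial : ℂ) *
          ((k - m + ν).factorial : ℂ))) * (z / 2) ^ (2 * (k - m) + ν)) =
      ((-1 : ℂ) ^ k * (z / 2) ^ (2 * k + (μ + ν))) *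
        ((1 : ℂ) / ((m.factorial : ℂ) * ((m + μ).factorial : ℂ) *
          ((k - m).factorial : ℂ) * ((k - m + ν).factorial : ℂ))) := by
    intro m hm
    have hmk : m ≤ k := by simpa [Nat.lt_succ_iff] using hm
    have e1 : ((-1 : ℂ)) ^ m * (-1 : ℂ) ^ (k - m) = (-1 : ℂ) ^ k := by
      rw [← pow_add, show m + (k - m) = k by omega]
    have e2 : (z / 2) ^ (2 * m + μ) * (z / 2) ^ (2 * (k - m) + ν) =
        (z / 2) ^ (2 * k + (μ + ν)) := by
      rw [← pow_add, show 2 * m + μ + (2 * (k - m) + ν) = 2 * k + (μ + ν) by omega]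
    calc ((-1 : ℂ) ^ m / ((m.factorial : ℂ) * ((m + μ).factorial : ℂ))) *
          (z / 2) ^ (2 * m + μ) *
        (((-1 : ℂ) ^ (k - m) / (((k - m).factorial : ℂ) *
          ((k - m + ν).factorial : ℂ))) * (z / 2) ^ (2 * (k - m) + ν))
        = (((-1 : ℂ)) ^ m * (-1 : ℂ) ^ (k - m)) *
            ((z / 2) ^ (2 * m + μ) * (z / 2) ^ (2 * (k - m) + ν)) *
            ((1 : ℂ) / ((m.factorial : ℂ) * ((m + μ).factorial : ℂ) *
              ((k - m).factorial : ℂ) * ((k - m + ν).factorial : ℂ))) := by ring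
      _ = _ := by rw [e1, e2]
  rw [Finset.sum_congr rfl key, ← Finset.mul_sum, innerFacSum]
  -- evaluate the right side
  simp only [List.map_cons, List.map_nil, List.prod_cons, List.prod_nil, mul_one]
  have hdup : (ascPochhammer ℂ k).eval (((μ : ℂ) + ν + 1) / 2) *
      (ascPochhammer ℂ k).eval (((μ : ℂ) + ν) / 2 + 1) =
      (((μ + ν + 2 * k).factorial : ℂ) / ((μ + ν).factorial : ℂ)) / 4 ^ k := by
    have h1 := asc_dup (((μ : ℂ) + ν + 1) / 2) k
    rw [show ((μ : ℂ) + ν + 1) / 2 + 1 / 2 = ((μ : ℂ) + ν) / 2 + 1 by ring,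
      show 2 * (((μ : ℂ) + ν + 1) / 2) = (((μ + ν : ℕ) : ℂ)) + 1 by push_cast; ring,
      asc_eval_nat (μ + ν) (2 * k)] at h1
    rw [eq_div_iff (pow_ne_zero k (by norm_num : (4:ℂ) ≠ 0)), h1]
  rw [hdup,
    show ((μ : ℂ) + 1) = (((μ : ℕ) : ℂ) + 1) by norm_num,
    asc_eval_nat μ k,
    show ((ν : ℂ) + 1) = (((ν : ℕ) : ℂ) + 1) by norm_num,
    asc_eval_nat ν k,
    show ((μ : ℂ) + ν + 1) = (((μ + ν : ℕ) : ℂ) + 1) by push_cast; ring,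
    asc_eval_nat (μ + ν) k]
  rw [show -(μ : ℤ) - (ν : ℤ) = -((μ + ν : ℕ) : ℤ) by push_cast; ring,
    zpow_neg, zpow_natCast]
  have hz1 : (-z ^ 2) ^ k = (-1 : ℂ) ^ k * z ^ (2 * k) := by
    rw [neg_pow, ← pow_mul]
  have hz2 : (z / 2) ^ (2 * k + (μ + ν)) = z ^ (2 * k + (μ + ν)) / 2 ^ (2 * k + (μ + ν)) :=
    div_pow z 2 _
  have h4 : (4 : ℂ) ^ k = 2 ^ (2 * k) := by
    rw [show (4 : ℂ) = 2 ^ 2 by norm_num, ← pow_mul]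
  rw [hz1, hz2, h4, pow_add z (2 * k) (μ + ν), pow_add (2 : ℂ) (2 * k) (μ + ν)]
  linear_combination alg ((-1 : ℂ) ^ k) (z ^ (2 * k)) (z ^ (μ + ν)) ((2 : ℂ) ^ (2 * k))
    ((2 : ℂ) ^ (μ + ν)) (μ.factorial : ℂ) (ν.factorial : ℂ) ((μ + ν).factorial : ℂ)
    (k.factorial : ℂ) ((μ + k).factorial : ℂ) ((ν + k).factorial : ℂ)
    ((μ + ν + k).factorial : ℂ) ((μ + ν + 2 * k).factorial : ℂ)
    (fne μ) (fne ν) (fne (μ + ν)) (fne k) (fne (μ + k)) (fne (ν + k)) (fne (μ + ν + k))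
    (pow_ne_zero _ two_ne_zero) (pow_ne_zero _ two_ne_zero)
end
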